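/- Let Γ be a ring, I a Γ-module, Λ = End_Γ(I), and J a Γ-module lying in add I (i.e. a direct summand of I^n for some n ≥ 0). Then for every Γ-module P the natural evaluation map Hom_Γ(P, J) → Hom_Λ(Hom_Γ(J, I), Hom_Γ(P, I)), sending f to the map g ↦ g ∘ f, is bijective, where Hom_Γ(J, I) and Hom_Γ(P, I) are left Λ-modules via post-composition. -/

import Mathlib

/-!
Maps out of `I^ι` are sums of maps `I → I` composed with the projections, so a
`Λ`-linear `θ` is determined by its values on the projections and is precomposition
with their tuple. A summand `J` of `I^n` inherits both halves: maps `J → I` separate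
points of `J`, and every `g : J → I` factors as `(g ∘ r) ∘ s` through `I^n`.
-/

universe u

namespace AuslanderIyamaStmt16

open LinearMap

/-- `X` belongs to `add I`: `X` is a direct summand of a finite direct power of `I`. -/
def inAdd (Γ : Type u) [Ring Γ] (I : Type u) [AddCommGroup I] [Module Γ I]
    (X : Type u) [AddCommGroup X] [Module Γ X] : Prop :=
  ∃ (n : ℕ) (s : X →ₗ[Γ] (Fin n → I)) (r : (Fin n → I) →ₗ[Γ] X),
    r ∘ₗ s = LinearMap.id

section

variable {Γ I M P ι : Type*} [Ring Γ] [AddCommGroup I] [Module Γ I]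
  [AddCommGroup M] [Module Γ M] [AddCommGroup P] [Module Γ P]

theorem eq_of_forall_comp_eq_of_injective_pi {J : Type*} [AddCommGroup J] [Module Γ J]
    (s : J →ₗ[Γ] (ι → I)) (hs : Function.Injective s) {f f' : P →ₗ[Γ] J}
    (h : ∀ g : J →ₗ[Γ] I, g ∘ₗ f = g ∘ₗ f') : f = f' := by
  rw [← cancel_left hs, ← pi_proj_comp (s ∘ₗ f), ← pi_proj_comp (s ∘ₗ f')]
  simp_rw [← comp_assoc, h]

theorem finset_sum_comp {N : Type*} [AddCommGroup N] [Module Γ N] (s : Finset ι)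
    (f : ι → M →ₗ[Γ] N) (g : P →ₗ[Γ] M) : (∑ i ∈ s, f i) ∘ₗ g = ∑ i ∈ s, f i ∘ₗ g :=
  map_sum (lcomp ℕ N g) f s

theorem apply_comp_eq_comp_pi [Fintype ι] [DecidableEq ι]
    (θ : (M →ₗ[Γ] I) →+ (P →ₗ[Γ] I))
    (hθ : ∀ (lam : Module.End Γ I) (g : M →ₗ[Γ] I), θ (lam ∘ₗ g) = lam ∘ₗ θ g)
    (s : M →ₗ[Γ] (ι → I)) (h : (ι → I) →ₗ[Γ] I) :
    θ (h ∘ₗ s) = h ∘ₗ pi (fun i => θ (proj i ∘ₗ s)) := by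
  have h_sum : ∑ i, (h ∘ₗ single Γ (fun _ => I) i) ∘ₗ proj i = h :=
    (lsum Γ (fun _ : ι => I) ℕ).apply_symm_apply h
  calc θ (h ∘ₗ s) = θ (∑ i, (h ∘ₗ single Γ (fun _ => I) i) ∘ₗ (proj i ∘ₗ s)) := by
        conv_lhs => rw [← h_sum, finset_sum_comp]
        simp_rw [comp_assoc]
    _ = ∑ i, (h ∘ₗ single Γ (fun _ => I) i) ∘ₗ θ (proj i ∘ₗ s) := by
        simp_rw [map_sum, hθ]
    _ = h ∘ₗ pi (fun i => θ (proj i ∘ₗ s)) := by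
        conv_rhs => rw [← h_sum, finset_sum_comp]
        simp_rw [comp_assoc, proj_pi]

end

theorem statement16 (Γ : Type u) [Ring Γ]
    (I : Type u) [AddCommGroup I] [Module Γ I]
    (J : Type u) [AddCommGroup J] [Module Γ J] (hJ : inAdd Γ I J)
    (P : Type u) [AddCommGroup P] [Module Γ P] :
    -- injectivity of `f ↦ (g ↦ g ∘ f)`
    (∀ f f' : P →ₗ[Γ] J, (∀ g : J →ₗ[Γ] I, g ∘ₗ f = g ∘ₗ f') → f = f') ∧
    -- surjectivity onto the `Λ`-homomorphisms, where `Λ = End_Γ(I)` acts by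
    -- post-composition
    ∀ θ : (J →ₗ[Γ] I) →+ (P →ₗ[Γ] I),
      (∀ (lam : Module.End Γ I) (g : J →ₗ[Γ] I), θ (lam ∘ₗ g) = lam ∘ₗ θ g) →
      ∃ f : P →ₗ[Γ] J, ∀ g : J →ₗ[Γ] I, θ g = g ∘ₗ f := by
  obtain ⟨n, s, r, hrs⟩ := hJ
  have hs : Function.Injective s :=
    Function.LeftInverse.injective (g := r) (LinearMap.congr_fun hrs)
  refine ⟨fun f f' => eq_of_forall_comp_eq_of_injective_pi s hs, fun θ hθ => ?_⟩
  refine ⟨r ∘ₗ pi (fun i => θ (proj i ∘ₗ s)), fun g => ?_⟩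
  calc θ g = θ ((g ∘ₗ r) ∘ₗ s) := by rw [comp_assoc, hrs, comp_id]
    _ = g ∘ₗ r ∘ₗ pi (fun i => θ (proj i ∘ₗ s)) := apply_comp_eq_comp_pi θ hθ s (g ∘ₗ r)

end AuslanderIyamaStmt16
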